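/- Let f : X → Y be a flat morphism of schemes with X locally Noetherian and the underlying space of X catenary. Assume that for every point y ∈ Y and every point x of Z := cl(f⁻¹(y)), the spectrum of the local ring of the reduced induced closed subscheme structure on Z at x is equidimensional (equivalently: the codimension codim(cl({x}), W) is the same for every irreducible component W of Z containing x). Then f is weakly catenarious. -/

import Mathlib

open TopologicalSpace

section TopDefs

variable {α β : Type*} [TopologicalSpace α] [TopologicalSpace β]

/-- The closure of a point, as an irreducible closed subset. -/
noncomputable def ptIC (x : α) : IrreducibleCloseds α :=
  ⟨closure {x}, isIrreducible_singleton.closure, isClosed_closure⟩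

/-- `codim(T, T')`: the supremum of lengths `n` of chains
`T = T₀ ⊊ T₁ ⊊ ⋯ ⊊ Tₙ ⊆ T'` of irreducible closed subsets. -/
noncomputable def icCodim (T T' : IrreducibleCloseds α) : ℕ∞ :=
  Set.chainHeight {Z : IrreducibleCloseds α | T < Z ∧ Z ≤ T'} (· < ·)

/-- The codimension of an irreducible closed subset in the whole space. -/
noncomputable def spCodim (T : IrreducibleCloseds α) : ℕ∞ :=
  Set.chainHeight {Z : IrreducibleCloseds α | T < Z} (· < ·)

/-- The closure of the image of an irreducible closed subset under a continuous map,
as an irreducible closed subset. -/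
noncomputable def imageIC (f : α → β) (hf : Continuous f) (T : IrreducibleCloseds α) :
    IrreducibleCloseds β :=
  ⟨closure (f '' (T : Set α)),
    (T.isIrreducible.image f hf.continuousOn).closure, isClosed_closure⟩

/-- `p` is a maximal chain of irreducible closed subsets starting with `T` and
ending with `T'`: no further irreducible closed subset can be inserted. -/
def IsMaxChainBtw (T T' : IrreducibleCloseds α) (p : LTSeries (IrreducibleCloseds α)) : Prop :=
  p.head = T ∧ p.last = T' ∧
    ∀ i : Fin p.length, ∀ Z : IrreducibleCloseds α,
      ¬ (p.toFun i.castSucc < Z ∧ Z < p.toFun i.succ)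

/-- A topological space is catenary if for all irreducible closed subsets `T ⊆ T'`,
every maximal chain of irreducible closed subsets starting with `T` and ending with `T'`
has the same length. -/
def CatenarySpace (α : Type*) [TopologicalSpace α] : Prop :=
  ∀ T T' : IrreducibleCloseds α, T ≤ T' →
    ∀ p q : LTSeries (IrreducibleCloseds α),
      IsMaxChainBtw T T' p → IsMaxChainBtw T T' q → p.length = q.length

/-- A continuous map is catenarious if
`codim(T, T') ≥ codim(cl(f(T)), cl(f(T')))` for all irreducible closed `T ⊆ T'`. -/
def Catenarious (f : α → β) (hf : Continuous f) : Prop :=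
  ∀ T T' : IrreducibleCloseds α, T ≤ T' →
    icCodim (imageIC f hf T) (imageIC f hf T') ≤ icCodim T T'

/-- `T'` is an irreducible component of the subset `s`:
a maximal irreducible subset of `s`. -/
def IsIrredComponentOf (T' s : Set α) : Prop :=
  T' ⊆ s ∧ IsIrreducible T' ∧ ∀ W : Set α, IsIrreducible W → T' ⊆ W → W ⊆ s → W = T'

/-- A continuous map `f` is weakly catenarious if for every point `y`, every irreducible
component `T'` of `f ⁻¹ y`, and every irreducible closed `T ⊆ cl(T')` with
`codim(T, cl(T')) = 1`, one has `codim(cl(f(T)), cl(f(T'))) ≤ 1`. -/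
def WeaklyCatenarious (f : α → β) (hf : Continuous f) : Prop :=
  ∀ y : β, ∀ T' : Set α, ∀ h : IsIrredComponentOf T' (f ⁻¹' {y}),
    ∀ T : IrreducibleCloseds α, (T : Set α) ⊆ closure T' →
      icCodim T ⟨closure T', h.2.1.closure, isClosed_closure⟩ = 1 →
      icCodim (imageIC f hf T)
        ⟨closure (f '' T'), (h.2.1.image f hf.continuousOn).closure, isClosed_closure⟩ ≤ 1

/-- A space is biequidimensional if all maximal chains of irreducible closed subsets
have the same length. -/
def BiequidimensionalSpace (α : Type*) [TopologicalSpace α] : Prop :=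
  ∀ p q : LTSeries (IrreducibleCloseds α),
    (IsMin p.head ∧ IsMax p.last ∧ ∀ i : Fin p.length, ∀ Z : IrreducibleCloseds α,
      ¬ (p.toFun i.castSucc < Z ∧ Z < p.toFun i.succ)) →
    (IsMin q.head ∧ IsMax q.last ∧ ∀ i : Fin q.length, ∀ Z : IrreducibleCloseds α,
      ¬ (q.toFun i.castSucc < Z ∧ Z < q.toFun i.succ)) →
    p.length = q.length

/-- `x` is a generic point of (an irreducible component of) the fiber `f ⁻¹ y`:
it lies in the fiber and admits no strict generalization inside the fiber. -/
def IsFiberGeneric (f : α → β) (y : β) (x : α) : Prop :=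
  f x = y ∧ ∀ z : α, f z = y → x ∈ closure {z} → z ∈ closure {x}

end TopDefs

/-- A morphism of schemes is flat if for every point the induced map of local rings
(stalks) is flat. -/
def SchemeHomFlat {X Y : AlgebraicGeometry.Scheme} (f : X ⟶ Y) : Prop :=
  ∀ x : X, RingHom.Flat (f.stalkMap x).hom


/-!
Flatness makes `f` generalizing, so a chain `cl f(T) ⊊ a ⊊ b ⊆ cl {y}` in `Y` lifts through
generic points to a chain `T ⊊ cl {x₁} ⊊ cl {x₂} ⊆ cl {x'}` with `f x' = y`; hence
`codim(T, W) ≥ 2` for an irreducible component `W` of `cl (f⁻¹ y)` containing `x'`. Since `X` is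
locally Noetherian, `cl T'` is also an irreducible component of `cl (f⁻¹ y)`, and
equidimensionality gives `codim(T, cl T') = codim(T, W) ≥ 2`, contradicting `codim(T, cl T') = 1`.
-/

section Codimension

variable {α β : Type*} [TopologicalSpace α] [TopologicalSpace β]

lemma one_lt_icCodim_iff {T B : IrreducibleCloseds α} :
    1 < icCodim T B ↔ ∃ D₁ D₂ : IrreducibleCloseds α, T < D₁ ∧ D₁ < D₂ ∧ D₂ ≤ B := by
  constructor
  · intro h
    obtain ⟨t, hts, ht2, htc⟩ :=
      Set.exists_isChain_of_le_chainHeight 2 (Order.add_one_le_of_lt h)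
    obtain ⟨a, b, hab, rfl⟩ := Set.encard_eq_two.mp (by exact_mod_cast ht2)
    have ha : a ∈ ({a, b} : Set _) := Set.mem_insert a {b}
    have hb : b ∈ ({a, b} : Set _) := Set.mem_insert_of_mem a rfl
    rcases htc ha hb hab with h | h
    · exact ⟨a, b, (hts ha).1, h, (hts hb).2⟩
    · exact ⟨b, a, (hts hb).1, h, (hts ha).2⟩
  · rintro ⟨D₁, D₂, h₁, h₁₂, h₂⟩
    have hpair : IsChain (· < ·) ({D₁, D₂} : Set (IrreducibleCloseds α)) := IsChain.pair h₁₂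
    have := Set.encard_le_chainHeight_of_isChain {Z | T < Z ∧ Z ≤ B} _ ?_ hpair
    · rw [Set.encard_pair h₁₂.ne] at this
      exact lt_of_lt_of_le (by norm_num) this
    · rintro Z (rfl | rfl)
      exacts [⟨h₁, h₁₂.le.trans h₂⟩, ⟨h₁.trans h₁₂, h₂⟩]

lemma le_of_one_le_icCodim {T B : IrreducibleCloseds α} (h : 1 ≤ icCodim T B) : T ≤ B := by
  obtain ⟨Z, hTZ, hZB⟩ := (Set.one_le_chainHeight_iff _ _).mp h
  exact hTZ.le.trans hZB

lemma icCodim_mono {T B B' : IrreducibleCloseds α} (h : B ≤ B') : icCodim T B ≤ icCodim T B' :=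
  Set.chainHeight_mono _ _ _ fun _ hZ ↦ ⟨hZ.1, hZ.2.trans h⟩

lemma ptIC_le_ptIC_iff {x y : α} : ptIC x ≤ ptIC y ↔ y ⤳ x :=
  specializes_iff_closure_subset.symm

lemma exists_ptIC_eq [QuasiSober α] (T : IrreducibleCloseds α) : ∃ x, ptIC x = T :=
  ⟨_, IrreducibleCloseds.ext <|
    T.isIrreducible.genericPoint_closure_eq.trans T.isClosed.closure_eq⟩

lemma imageIC_ptIC {f : α → β} (hf : Continuous f) (x : α) :
    imageIC f hf (ptIC x) = ptIC (f x) :=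
  IrreducibleCloseds.ext <| by
    simp [imageIC, ptIC, closure_image_closure hf, Set.image_singleton]

lemma GeneralizingMap.exists_ptIC_lt {f : α → β} (hf : Continuous f) (hgen : GeneralizingMap f)
    {x : α} {z : β} (h : ptIC (f x) < ptIC z) : ∃ x', f x' = z ∧ ptIC x < ptIC x' := by
  obtain ⟨x', hx'x, rfl⟩ := hgen (ptIC_le_ptIC_iff.mp h.le)
  refine ⟨x', rfl, lt_of_le_not_ge (ptIC_le_ptIC_iff.mpr hx'x) fun hle ↦ h.not_ge ?_⟩
  exact ptIC_le_ptIC_iff.mpr ((ptIC_le_ptIC_iff.mp hle).map hf)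

lemma GeneralizingMap.exists_one_lt_icCodim [QuasiSober β] {f : α → β} (hf : Continuous f)
    (hgen : GeneralizingMap f) {x : α} {y : β} (h : 1 < icCodim (ptIC (f x)) (ptIC y)) :
    ∃ x', f x' = y ∧ 1 < icCodim (ptIC x) (ptIC x') := by
  obtain ⟨D₁, D₂, h₁, h₁₂, h₂⟩ := one_lt_icCodim_iff.mp h
  obtain ⟨z₁, rfl⟩ := exists_ptIC_eq D₁
  obtain ⟨z₂, rfl⟩ := exists_ptIC_eq D₂
  obtain ⟨x₁, rfl, hx₁⟩ := hgen.exists_ptIC_lt hf h₁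
  obtain ⟨x₂, rfl, hx₁₂⟩ := hgen.exists_ptIC_lt hf h₁₂
  obtain ⟨x₃, hx₃x₂, rfl⟩ := hgen (ptIC_le_ptIC_iff.mp h₂)
  exact ⟨x₃, rfl, one_lt_icCodim_iff.mpr ⟨_, _, hx₁, hx₁₂, ptIC_le_ptIC_iff.mpr hx₃x₂⟩⟩

end Codimension

section IrreducibleComponents

variable {α : Type*} [TopologicalSpace α]

lemma IsChain.isPreirreducible_sUnion {c : Set (Set α)} (hc : IsChain (· ⊆ ·) c)
    (h : ∀ t ∈ c, IsPreirreducible t) : IsPreirreducible (⋃₀ c) := by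
  rintro u v hu hv ⟨a, ⟨p, hpc, hap⟩, hau⟩ ⟨b, ⟨q, hqc, hbq⟩, hbv⟩
  obtain ⟨r, hrc, hpr, hqr⟩ : ∃ r ∈ c, p ⊆ r ∧ q ⊆ r := by
    rcases hc.total hpc hqc with hpq | hqp
    exacts [⟨q, hqc, hpq, subset_rfl⟩, ⟨p, hpc, subset_rfl, hqp⟩]
  obtain ⟨z, hzr, hzuv⟩ := h r hrc u v hu hv ⟨a, hpr hap, hau⟩ ⟨b, hqr hbq, hbv⟩
  exact ⟨z, Set.subset_sUnion_of_mem hrc hzr, hzuv⟩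

lemma exists_isIrredComponentOf_superset {C Z : Set α} (hC : IsIrreducible C) (hCZ : C ⊆ Z) :
    ∃ W, IsIrredComponentOf W Z ∧ C ⊆ W := by
  obtain ⟨W, hCW, hW⟩ := zorn_subset_nonempty {t : Set α | IsIrreducible t ∧ t ⊆ Z}
    (fun c hc hchain ⟨t₀, ht₀⟩ ↦ ⟨⋃₀ c,
      ⟨⟨(hc ht₀).1.nonempty.mono (Set.subset_sUnion_of_mem ht₀),
        hchain.isPreirreducible_sUnion fun t ht ↦ (hc ht).1.isPreirreducible⟩,
        Set.sUnion_subset fun t ht ↦ (hc ht).2⟩,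
      fun _ ↦ Set.subset_sUnion_of_mem⟩) C ⟨hC, hCZ⟩
  exact ⟨W, ⟨hW.prop.2, hW.prop.1, fun V hV hWV hVZ ↦ (hW.eq_of_subset ⟨hV, hVZ⟩ hWV).symm⟩, hCW⟩

lemma IsIrredComponentOf.closure_inter_eq {T S : Set α} (h : IsIrredComponentOf T S) :
    closure T ∩ S = T := by
  have hT : T ⊆ closure T ∩ S := Set.subset_inter subset_closure h.1
  have hcl : closure (closure T ∩ S) = closure T :=
    ((closure_mono Set.inter_subset_left).trans_eq closure_closure).antisymm (closure_mono hT)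
  exact h.2.2 _ (isIrreducible_iff_closure.mp (hcl.symm ▸ h.2.1.closure)) hT Set.inter_subset_right

lemma exists_isIrreducible_subset_mem_closure {s : Set α} [NoetherianSpace s] {x : α}
    (hx : x ∈ closure s) : ∃ t ⊆ s, IsIrreducible t ∧ x ∈ closure t := by
  have hs : s = ⋃ c ∈ irreducibleComponents s, Subtype.val '' c := by
    rw [← Set.image_iUnion₂, ← Set.sUnion_eq_biUnion, sUnion_irreducibleComponents,
      Set.image_univ, Subtype.range_coe]
  rw [hs, NoetherianSpace.finite_irreducibleComponents.closure_biUnion] at hx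
  obtain ⟨c, hc, hxc⟩ := Set.mem_iUnion₂.mp hx
  exact ⟨_, Subtype.coe_image_subset s c,
    hc.1.image _ continuous_subtype_val.continuousOn, hxc⟩

lemma IsIrredComponentOf.isIrredComponentOf_closure [QuasiSober α]
    (hloc : ∀ x : α, ∃ U : Set α, IsOpen U ∧ x ∈ U ∧ NoetherianSpace U)
    {T S : Set α} (h : IsIrredComponentOf T S) :
    IsIrredComponentOf (closure T) (closure S) := by
  refine ⟨closure_mono h.1, h.2.1.closure, fun V hV hTV hVS ↦ ?_⟩
  -- `S` is a finite union of irreducible pieces near the generic point `η` of `V`; the component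
  -- of `S` containing a piece whose closure contains `η` has closure `⊇ V ⊇ T`, so it is `T`.
  set η := hV.genericPoint
  have hηV : closure {η} = closure V := hV.genericPoint_closure_eq
  obtain ⟨U, hU, hηU, hUnoeth⟩ := hloc η
  have hηS : η ∈ closure (U ∩ S) :=
    hU.inter_closure ⟨hηU, closure_minimal hVS isClosed_closure (hηV ▸ subset_closure rfl)⟩
  have := NoetherianSpace.inter_of_left U S
  obtain ⟨C, hCS, hC, hηC⟩ := exists_isIrreducible_subset_mem_closure hηS
  obtain ⟨T'', hT'', hCT''⟩ :=
    exists_isIrredComponentOf_superset hC (hCS.trans Set.inter_subset_right)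
  have hVT'' : V ⊆ closure T'' := subset_closure.trans <| hηV ▸
    closure_minimal (Set.singleton_subset_iff.mpr (closure_mono hCT'' hηC)) isClosed_closure
  have hTT'' : T ⊆ T'' := by
    rw [← hT''.closure_inter_eq]
    exact Set.subset_inter ((subset_closure.trans hTV).trans hVT'') h.1
  rw [← h.2.2 T'' hT''.2.1 hTT'' hT''.1] at hTV ⊢
  exact hTV.antisymm' hVT''

end IrreducibleComponents

lemma AlgebraicGeometry.Scheme.exists_isOpen_mem_noetherianSpace {X : Scheme}
    [IsLocallyNoetherian X] (x : X) : ∃ U : Set X, IsOpen U ∧ x ∈ U ∧ NoetherianSpace U := by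
  obtain ⟨_, ⟨U, hU, rfl⟩, hxU, -⟩ :=
    X.isBasis_affineOpens.exists_subset_of_mem_open (Set.mem_univ x) isOpen_univ
  have := IsLocallyNoetherian.component_noetherian ⟨U, hU⟩
  exact ⟨U, U.isOpen, hxU, noetherianSpace_of_isAffineOpen U hU⟩

theorem statement4_general {X Y : AlgebraicGeometry.Scheme} (f : X ⟶ Y)
    (hflat : SchemeHomFlat f) [AlgebraicGeometry.IsLocallyNoetherian X]
    (hequi : ∀ y : Y, ∀ x : X, x ∈ closure (f.base ⁻¹' {y}) →
      ∀ W W' : Set X, ∀ hW : IsIrredComponentOf W (closure (f.base ⁻¹' {y})),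
        ∀ hW' : IsIrredComponentOf W' (closure (f.base ⁻¹' {y})), x ∈ W → x ∈ W' →
          icCodim (ptIC x) ⟨closure W, hW.2.1.closure, isClosed_closure⟩ =
            icCodim (ptIC x) ⟨closure W', hW'.2.1.closure, isClosed_closure⟩) :
    WeaklyCatenarious f.base f.base.hom.continuous := by
  have hgen : GeneralizingMap f.base :=
    haveI := AlgebraicGeometry.Flat.of_stalkMap f hflat
    AlgebraicGeometry.Flat.generalizingMap f
  intro y T' hT' T hTT' hcodim
  obtain ⟨x, rfl⟩ := exists_ptIC_eq T
  have hfT' : f.base '' T' = {y} :=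
    (hT'.2.1.nonempty.image _).subset_singleton_iff.mp (Set.image_subset_iff.mpr hT'.1)
  by_contra hlt
  simp only [hfT', imageIC_ptIC, not_le] at hlt
  obtain ⟨x', rfl, hxx'⟩ := hgen.exists_one_lt_icCodim f.base.hom.continuous hlt
  have hx'fib : closure {x'} ⊆ closure (f.base ⁻¹' {f.base x'}) :=
    closure_mono (Set.singleton_subset_iff.mpr rfl)
  obtain ⟨W, hW, hx'W⟩ := exists_isIrredComponentOf_superset isIrreducible_singleton.closure hx'fib
  have hT'cl := hT'.isIrredComponentOf_closure
    AlgebraicGeometry.Scheme.exists_isOpen_mem_noetherianSpace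
  have hxT' : x ∈ closure T' := hTT' (subset_closure rfl)
  have hxW : x ∈ W := hx'W (ptIC_le_ptIC_iff.mp (le_of_one_le_icCodim hxx'.le)).mem_closure
  have hcodimW := hequi _ x (hT'cl.1 hxT') _ W hT'cl hW hxT' hxW
  simp only [closure_closure, hcodim] at hcodimW
  exact (hxx'.trans_le (icCodim_mono (hx'W.trans subset_closure))).ne hcodimW

/-- A flat morphism of schemes with locally Noetherian catenary source such
that, for every `y` and every point `x` of `Z = cl(f⁻¹ y)`, the codimension of `cl {x}`
is the same in every irreducible component of `Z` containing `x`
(equidimensionality of the local rings of `Z`), is weakly catenarious. -/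
theorem statement4 {X Y : AlgebraicGeometry.Scheme} (f : X ⟶ Y)
    (hflat : SchemeHomFlat f) [AlgebraicGeometry.IsLocallyNoetherian X]
    (hcat : CatenarySpace X)
    (hequi : ∀ y : Y, ∀ x : X, x ∈ closure (f.base ⁻¹' {y}) →
      ∀ W W' : Set X, ∀ hW : IsIrredComponentOf W (closure (f.base ⁻¹' {y})),
        ∀ hW' : IsIrredComponentOf W' (closure (f.base ⁻¹' {y})), x ∈ W → x ∈ W' →
          icCodim (ptIC x) ⟨closure W, hW.2.1.closure, isClosed_closure⟩ =
            icCodim (ptIC x) ⟨closure W', hW'.2.1.closure, isClosed_closure⟩) :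
    WeaklyCatenarious f.base f.base.hom.continuous :=
  statement4_general f hflat hequi
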